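/- arXiv:1901.03600 — 7 statements merged into one kernel-verified Lean document; each statement's English description precedes it below -/
import Mathlib

section
/- In the group G₁, the following equality holds: (x₂⁻¹·u)·x₁⁻¹·(x₂⁻¹·u)⁻¹ = x₄⁻¹·x₄⁻¹·x₂. (This is the verification that the substitution xᵢ ↦ xᵢ⁻¹, u ↦ x₂⁻¹u preserves the first defining relation of G₁.) -/
/-- Relator words for the presentation of `G₁`: generators are indexed by `Fin 5`,
with `0,1,2,3` corresponding to `x₁,x₂,x₃,x₄` and `4` to `u`.  The relations are
`u·xᵢ·u⁻¹ = wᵢ` written as relators `(u·xᵢ·u⁻¹)·wᵢ⁻¹`. -/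
def G1rels : Set (FreeGroup (Fin 5)) :=
  {(FreeGroup.of 4 * FreeGroup.of 0 * (FreeGroup.of 4)⁻¹) *
      (FreeGroup.of 3 * FreeGroup.of 3 * (FreeGroup.of 1)⁻¹)⁻¹,
   (FreeGroup.of 4 * FreeGroup.of 1 * (FreeGroup.of 4)⁻¹) *
      (FreeGroup.of 1 * (FreeGroup.of 3)⁻¹ * FreeGroup.of 1 * FreeGroup.of 2 *
        FreeGroup.of 1 * (FreeGroup.of 3)⁻¹)⁻¹,
   (FreeGroup.of 4 * FreeGroup.of 2 * (FreeGroup.of 4)⁻¹) *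
      (FreeGroup.of 3 * (FreeGroup.of 1)⁻¹)⁻¹,
   (FreeGroup.of 4 * FreeGroup.of 3 * (FreeGroup.of 4)⁻¹) *
      (FreeGroup.of 3 * (FreeGroup.of 0)⁻¹ * FreeGroup.of 3 * (FreeGroup.of 1)⁻¹)⁻¹}

/-- The group `G₁ = ⟨x₁,x₂,x₃,x₄,u ∣ u·x₁·u⁻¹ = x₄·x₄·x₂⁻¹,
`u·x₂·u⁻¹ = x₂·x₄⁻¹·x₂·x₃·x₂·x₄⁻¹`, `u·x₃·u⁻¹ = x₄·x₂⁻¹`,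
`u·x₄·u⁻¹ = x₄·x₁⁻¹·x₄·x₂⁻¹⟩`. -/
abbrev G₁ : Type := PresentedGroup G1rels

def x₁ : G₁ := PresentedGroup.of 0
def x₂ : G₁ := PresentedGroup.of 1
def x₃ : G₁ := PresentedGroup.of 2
def x₄ : G₁ := PresentedGroup.of 3
def u : G₁ := PresentedGroup.of 4

theorem u_mul_x₁_mul_u_inv : u * x₁ * u⁻¹ = x₄ * x₄ * x₂⁻¹ :=
  PresentedGroup.mk_eq_mk_of_mul_inv_mem (Set.mem_insert _ _)

/-- The substitution xᵢ ↦ xᵢ⁻¹, u ↦ x₂⁻¹·u preserves a defining relation of G₁. -/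
theorem G1_substitution_preserves_rel1 :
    (x₂⁻¹ * u) * x₁⁻¹ * (x₂⁻¹ * u)⁻¹ = x₄⁻¹ * x₄⁻¹ * x₂ := by
  calc (x₂⁻¹ * u) * x₁⁻¹ * (x₂⁻¹ * u)⁻¹ = x₂⁻¹ * (u * x₁ * u⁻¹)⁻¹ * x₂ := by group
    _ = x₂⁻¹ * (x₄ * x₄ * x₂⁻¹)⁻¹ * x₂ := by rw [u_mul_x₁_mul_u_inv]
    _ = x₄⁻¹ * x₄⁻¹ * x₂ := by group
end

section
/- In the group G₁, the following equality holds: (x₂⁻¹·u)·x₂⁻¹·(x₂⁻¹·u)⁻¹ = x₂⁻¹·x₄·x₂⁻¹·x₃⁻¹·x₂⁻¹·x₄. (This is the verification that the substitution xᵢ ↦ xᵢ⁻¹, u ↦ x₂⁻¹u preserves the second defining relation of G₁.) -/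
theorem u_mul_x₂_mul_u_inv : u * x₂ * u⁻¹ = x₂ * x₄⁻¹ * x₂ * x₃ * x₂ * x₄⁻¹ := by
  have hrel := PresentedGroup.mk_eq_mk_of_mul_inv_mem (rels := G1rels)
    (x := .of 4 * .of 1 * (.of 4)⁻¹)
    (y := .of 1 * (.of 3)⁻¹ * .of 1 * .of 2 * .of 1 * (.of 3)⁻¹) (by simp [G1rels])
  -- `hrel` is the goal up to unfolding: `mk` is a homomorphism and each generator is `mk (of i)`.
  exact hrel

/-- The substitution xᵢ ↦ xᵢ⁻¹, u ↦ x₂⁻¹·u preserves a defining relation of G₁. -/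
theorem G1_substitution_preserves_rel2 :
    (x₂⁻¹ * u) * x₂⁻¹ * (x₂⁻¹ * u)⁻¹ = x₂⁻¹ * x₄ * x₂⁻¹ * x₃⁻¹ * x₂⁻¹ * x₄ := by
  calc (x₂⁻¹ * u) * x₂⁻¹ * (x₂⁻¹ * u)⁻¹ = x₂⁻¹ * (u * x₂ * u⁻¹)⁻¹ * x₂ := by group
    _ = x₂⁻¹ * (x₂ * x₄⁻¹ * x₂ * x₃ * x₂ * x₄⁻¹)⁻¹ * x₂ := by rw [u_mul_x₂_mul_u_inv]
    _ = x₂⁻¹ * x₄ * x₂⁻¹ * x₃⁻¹ * x₂⁻¹ * x₄ := by group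
end

section
/- In the group G₁, the following equality holds: (x₂⁻¹·u)·x₃⁻¹·(x₂⁻¹·u)⁻¹ = x₄⁻¹·x₂. (This is the verification that the substitution xᵢ ↦ xᵢ⁻¹, u ↦ x₂⁻¹u preserves the third defining relation of G₁.) -/
theorem conj_inv_mul_eq_inv_mul_of_conj_eq_mul_inv {G : Type*} [Group G] {u x a b : G}
    (h : u * x * u⁻¹ = a * b⁻¹) : (b⁻¹ * u) * x⁻¹ * (b⁻¹ * u)⁻¹ = a⁻¹ * b :=
  calc (b⁻¹ * u) * x⁻¹ * (b⁻¹ * u)⁻¹ = b⁻¹ * (u * x * u⁻¹)⁻¹ * b := by group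
    _ = a⁻¹ * b := by rw [h]; group

theorem u_mul_x₃_mul_u_inv : u * x₃ * u⁻¹ = x₄ * x₂⁻¹ :=
  PresentedGroup.mk_eq_mk_of_mul_inv_mem (rels := G1rels)
    (x := FreeGroup.of 4 * FreeGroup.of 2 * (FreeGroup.of 4)⁻¹)
    (y := FreeGroup.of 3 * (FreeGroup.of 1)⁻¹) (by simp [G1rels])

/-- The substitution xᵢ ↦ xᵢ⁻¹, u ↦ x₂⁻¹·u preserves a defining relation of G₁. -/
theorem G1_substitution_preserves_rel3 :
    (x₂⁻¹ * u) * x₃⁻¹ * (x₂⁻¹ * u)⁻¹ = x₄⁻¹ * x₂ :=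
  conj_inv_mul_eq_inv_mul_of_conj_eq_mul_inv u_mul_x₃_mul_u_inv
end

section
/- In the group G₁, the following equality holds: (x₂⁻¹·u)·x₄⁻¹·(x₂⁻¹·u)⁻¹ = x₄⁻¹·x₁·x₄⁻¹·x₂. (This is the verification that the substitution xᵢ ↦ xᵢ⁻¹, u ↦ x₂⁻¹u preserves the fourth defining relation of G₁.) -/
theorem u_mul_x₄_mul_u_inv : u * x₄ * u⁻¹ = x₄ * x₁⁻¹ * x₄ * x₂⁻¹ :=
  PresentedGroup.mk_eq_mk_of_mul_inv_mem (y := FreeGroup.of 3 * (FreeGroup.of 0)⁻¹ *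
    FreeGroup.of 3 * (FreeGroup.of 1)⁻¹) (.inr <| .inr <| .inr rfl)

/-- The substitution xᵢ ↦ xᵢ⁻¹, u ↦ x₂⁻¹·u preserves a defining relation of G₁. -/
theorem G1_substitution_preserves_rel4 :
    (x₂⁻¹ * u) * x₄⁻¹ * (x₂⁻¹ * u)⁻¹ = x₄⁻¹ * x₁ * x₄⁻¹ * x₂ := by
  calc (x₂⁻¹ * u) * x₄⁻¹ * (x₂⁻¹ * u)⁻¹ = x₂⁻¹ * (u * x₄ * u⁻¹)⁻¹ * x₂ := by group
    _ = x₄⁻¹ * x₁ * x₄⁻¹ * x₂ := by rw [u_mul_x₄_mul_u_inv]; group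
end

section
/- There exists a group homomorphism φ : G₁ → G₁ satisfying φ(x₁) = x₁⁻¹, φ(x₂) = x₂⁻¹, φ(x₃) = x₃⁻¹, φ(x₄) = x₄⁻¹, and φ(u) = x₂⁻¹·u; that is, the substitution xᵢ ↦ xᵢ⁻¹ (i = 1, 2, 3, 4), u ↦ x₂⁻¹u preserves all four defining relations of G₁ and hence defines an endomorphism of G₁. -/
/-!
Applying the substitution to a relation `u·xᵢ·u⁻¹ = wᵢ` turns its left side into
`x₂⁻¹·(u·xᵢ·u⁻¹)⁻¹·x₂ = x₂⁻¹·wᵢ⁻¹·x₂`, and for each of the four words `wᵢ` this freely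
reduces to `wᵢ` with every letter inverted, which is the image of the right side.
-/

theorem conj_mul_inv_of_conj_eq {G : Type*} [Group G] {u x w : G} (y : G)
    (h : u * x * u⁻¹ = w) : y * u * x⁻¹ * (y * u)⁻¹ = y * w⁻¹ * y⁻¹ := by
  rw [← h]
  group

open PresentedGroup in
theorem G1_relations :
    u * x₁ * u⁻¹ = x₄ * x₄ * x₂⁻¹ ∧
    u * x₂ * u⁻¹ = x₂ * x₄⁻¹ * x₂ * x₃ * x₂ * x₄⁻¹ ∧
    u * x₃ * u⁻¹ = x₄ * x₂⁻¹ ∧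
    u * x₄ * u⁻¹ = x₄ * x₁⁻¹ * x₄ * x₂⁻¹ := by
  simp only [x₁, x₂, x₃, x₄, u, PresentedGroup.of, ← map_mul, ← map_inv]
  refine ⟨?_, ?_, ?_, ?_⟩ <;> exact mk_eq_mk_of_mul_inv_mem (by simp [G1rels])

def invSubst : Fin 5 → G₁ := ![x₁⁻¹, x₂⁻¹, x₃⁻¹, x₄⁻¹, x₂⁻¹ * u]

theorem lift_invSubst_eq_one : ∀ r ∈ G1rels, FreeGroup.lift invSubst r = 1 := by
  obtain ⟨h₁, h₂, h₃, h₄⟩ := G1_relations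
  rintro r (rfl | rfl | rfl | rfl) <;>
    simp only [map_mul, map_inv, FreeGroup.lift_apply_of, invSubst, Matrix.cons_val,
      inv_inv, mul_inv_eq_one]
  · rw [conj_mul_inv_of_conj_eq _ h₁]; group
  · rw [conj_mul_inv_of_conj_eq _ h₂]; group
  · rw [conj_mul_inv_of_conj_eq _ h₃]; group
  · rw [conj_mul_inv_of_conj_eq _ h₄]; group

/-- There exists an endomorphism of `G₁` sending `xᵢ ↦ xᵢ⁻¹` and `u ↦ x₂⁻¹·u`. -/
theorem G1_exists_hom :
    ∃ φ : G₁ →* G₁,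
      φ x₁ = x₁⁻¹ ∧ φ x₂ = x₂⁻¹ ∧ φ x₃ = x₃⁻¹ ∧ φ x₄ = x₄⁻¹ ∧ φ u = x₂⁻¹ * u :=
  ⟨PresentedGroup.toGroup lift_invSubst_eq_one, by
    refine ⟨?_, ?_, ?_, ?_, ?_⟩ <;> exact PresentedGroup.toGroup.of _⟩
end

section
/- Every group homomorphism φ : G₁ → G₁ satisfying φ(x₁) = x₁⁻¹, φ(x₂) = x₂⁻¹, φ(x₃) = x₃⁻¹, φ(x₄) = x₄⁻¹, and φ(u) = x₂⁻¹·u is an involution, i.e. φ ∘ φ is the identity map of G₁; in particular, φ is an automorphism of G₁. -/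
theorem PresentedGroup.involutive_of_forall_of {α : Type*} {rels : Set (FreeGroup α)}
    (φ : PresentedGroup rels →* PresentedGroup rels)
    (h : ∀ a, φ (φ (PresentedGroup.of a)) = PresentedGroup.of a) :
    Function.Involutive φ := by
  have hcomp : φ.comp φ = MonoidHom.id _ := PresentedGroup.ext h
  exact fun g => DFunLike.congr_fun hcomp g

theorem MonoidHom.map_map_of_map_eq_inv {G : Type*} [Group G] (φ : G →* G) {x : G}
    (hx : φ x = x⁻¹) : φ (φ x) = x := by
  rw [hx, map_inv, hx, inv_inv]

theorem MonoidHom.map_map_of_map_eq_inv_mul {G : Type*} [Group G] (φ : G →* G) {x y : G}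
    (hx : φ x = x⁻¹) (hy : φ y = x⁻¹ * y) : φ (φ y) = y := by
  rw [hy, map_mul, map_inv, hx, hy, inv_inv, mul_inv_cancel_left]

/-- Any endomorphism of `G₁` sending `xᵢ ↦ xᵢ⁻¹` and `u ↦ x₂⁻¹·u` is an involution,
hence an automorphism. -/
theorem G1_hom_is_involution (φ : G₁ →* G₁)
    (h₁ : φ x₁ = x₁⁻¹) (h₂ : φ x₂ = x₂⁻¹) (h₃ : φ x₃ = x₃⁻¹) (h₄ : φ x₄ = x₄⁻¹)
    (hu : φ u = x₂⁻¹ * u) :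
    (∀ g : G₁, φ (φ g) = g) ∧ Function.Bijective φ := by
  have hφ : Function.Involutive φ := by
    refine PresentedGroup.involutive_of_forall_of φ fun i => ?_
    fin_cases i
    · exact φ.map_map_of_map_eq_inv h₁
    · exact φ.map_map_of_map_eq_inv h₂
    · exact φ.map_map_of_map_eq_inv h₃
    · exact φ.map_map_of_map_eq_inv h₄
    · exact φ.map_map_of_map_eq_inv_mul h₂ hu
  exact ⟨hφ, hφ.bijective⟩
end

section
/- Let w = x₁·x₂·x₃·x₄·x₁⁻¹·x₂⁻¹·x₃⁻¹·x₄⁻¹ in G₁, and let φ : G₁ → G₁ be a group homomorphism satisfying φ(xᵢ) = xᵢ⁻¹ for i = 1, 2, 3, 4 and φ(u) = x₂⁻¹·u. Then φ(w) is conjugate to w in G₁; more precisely, φ(w) = (x₁·x₂·x₃·x₄)⁻¹·w·(x₁·x₂·x₃·x₄). (That is, the automorphism preserves the conjugacy class of the element representing the boundary of the genus-two Seifert surface.) -/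
/-! With `p = x₁x₂x₃x₄` and `q = x₁⁻¹x₂⁻¹x₃⁻¹x₄⁻¹` the boundary word is `w = pq`. An
endomorphism inverting each `xᵢ` swaps `p` and `q`, hence sends `w` to `qp = p⁻¹ w p`. -/

section InvertingEndomorphism

variable {G : Type*} [Group G] {φ : G →* G}

theorem MonoidHom.map_mul_eq_conj_of_swap {p q : G} (hp : φ p = q) (hq : φ q = p) :
    φ (p * q) = p⁻¹ * (p * q) * p := by
  rw [map_mul, hp, hq]
  group

variable {a b c d : G}

theorem MonoidHom.map_mul_mul_mul_of_map_eq_inv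
    (ha : φ a = a⁻¹) (hb : φ b = b⁻¹) (hc : φ c = c⁻¹) (hd : φ d = d⁻¹) :
    φ (a * b * c * d) = a⁻¹ * b⁻¹ * c⁻¹ * d⁻¹ := by
  simp only [map_mul, ha, hb, hc, hd]

theorem MonoidHom.map_inv_mul_inv_mul_inv_mul_inv_of_map_eq_inv
    (ha : φ a = a⁻¹) (hb : φ b = b⁻¹) (hc : φ c = c⁻¹) (hd : φ d = d⁻¹) :
    φ (a⁻¹ * b⁻¹ * c⁻¹ * d⁻¹) = a * b * c * d := by
  simp only [map_mul, map_inv, ha, hb, hc, hd, inv_inv]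

theorem MonoidHom.map_boundary_eq_conj_of_map_eq_inv
    (ha : φ a = a⁻¹) (hb : φ b = b⁻¹) (hc : φ c = c⁻¹) (hd : φ d = d⁻¹) :
    φ (a * b * c * d * a⁻¹ * b⁻¹ * c⁻¹ * d⁻¹) =
      (a * b * c * d)⁻¹ * (a * b * c * d * a⁻¹ * b⁻¹ * c⁻¹ * d⁻¹) * (a * b * c * d) := by
  have hw : a * b * c * d * a⁻¹ * b⁻¹ * c⁻¹ * d⁻¹ =
      a * b * c * d * (a⁻¹ * b⁻¹ * c⁻¹ * d⁻¹) := by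
    simp only [mul_assoc]
  rw [hw]
  exact MonoidHom.map_mul_eq_conj_of_swap
    (MonoidHom.map_mul_mul_mul_of_map_eq_inv ha hb hc hd)
    (MonoidHom.map_inv_mul_inv_mul_inv_mul_inv_of_map_eq_inv ha hb hc hd)

end InvertingEndomorphism

theorem isConj_of_eq_inv_mul_mul {G : Type*} [Group G] {g h p : G} (h_eq : h = p⁻¹ * g * p) :
    IsConj g h :=
  isConj_iff.mpr ⟨p⁻¹, by rw [h_eq, inv_inv]⟩

theorem G1_hom_preserves_boundary_conjugacy_general (φ : G₁ →* G₁)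
    (h₁ : φ x₁ = x₁⁻¹) (h₂ : φ x₂ = x₂⁻¹) (h₃ : φ x₃ = x₃⁻¹) (h₄ : φ x₄ = x₄⁻¹) :
    φ (x₁ * x₂ * x₃ * x₄ * x₁⁻¹ * x₂⁻¹ * x₃⁻¹ * x₄⁻¹) =
      (x₁ * x₂ * x₃ * x₄)⁻¹ * (x₁ * x₂ * x₃ * x₄ * x₁⁻¹ * x₂⁻¹ * x₃⁻¹ * x₄⁻¹) *
        (x₁ * x₂ * x₃ * x₄) ∧
    IsConj (x₁ * x₂ * x₃ * x₄ * x₁⁻¹ * x₂⁻¹ * x₃⁻¹ * x₄⁻¹)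
      (φ (x₁ * x₂ * x₃ * x₄ * x₁⁻¹ * x₂⁻¹ * x₃⁻¹ * x₄⁻¹)) := by
  have hφw := MonoidHom.map_boundary_eq_conj_of_map_eq_inv h₁ h₂ h₃ h₄
  exact ⟨hφw, isConj_of_eq_inv_mul_mul hφw⟩

/-- The automorphism `xᵢ ↦ xᵢ⁻¹`, `u ↦ x₂⁻¹·u` of `G₁` sends the boundary word
`w = x₁·x₂·x₃·x₄·x₁⁻¹·x₂⁻¹·x₃⁻¹·x₄⁻¹` to the conjugate
`(x₁·x₂·x₃·x₄)⁻¹·w·(x₁·x₂·x₃·x₄)`; in particular `φ w` is conjugate to `w`. -/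
theorem G1_hom_preserves_boundary_conjugacy (φ : G₁ →* G₁)
    (h₁ : φ x₁ = x₁⁻¹) (h₂ : φ x₂ = x₂⁻¹) (h₃ : φ x₃ = x₃⁻¹) (h₄ : φ x₄ = x₄⁻¹)
    (hu : φ u = x₂⁻¹ * u) :
    φ (x₁ * x₂ * x₃ * x₄ * x₁⁻¹ * x₂⁻¹ * x₃⁻¹ * x₄⁻¹) =
      (x₁ * x₂ * x₃ * x₄)⁻¹ * (x₁ * x₂ * x₃ * x₄ * x₁⁻¹ * x₂⁻¹ * x₃⁻¹ * x₄⁻¹) *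
        (x₁ * x₂ * x₃ * x₄) ∧
    IsConj (x₁ * x₂ * x₃ * x₄ * x₁⁻¹ * x₂⁻¹ * x₃⁻¹ * x₄⁻¹)
      (φ (x₁ * x₂ * x₃ * x₄ * x₁⁻¹ * x₂⁻¹ * x₃⁻¹ * x₄⁻¹)) :=
  G1_hom_preserves_boundary_conjugacy_general φ h₁ h₂ h₃ h₄
end
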